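/- In a randomized trial with noncompliance, under randomization, exclusion restriction for never-takers and always-takers, and monotonicity (no defiers), the intent-to-treat effect E[Y(z=1)] − E[Y(z=0)] equals the probability of being a complier times the average causal effect among compliers (the instrumental variables / CACE identity). -/

import Mathlib

/-! Under monotonicity every non-complier has `D(0) = D(1)`, so by the exclusion restriction
the reduced-form effect `Y(1) - Y(0)` vanishes off the compliers; the mean of a variable
supported on an event is the event's probability times its conditional mean there. -/

open scoped Classical
open Finset

noncomputable def Pr {Ω : Type*} [Fintype Ω] (p : Ω → ℝ) (A : Ω → Prop) : ℝ :=
  ∑ ω, if A ω then p ω else 0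

noncomputable def CE {Ω : Type*} [Fintype Ω] (p : Ω → ℝ) (f : Ω → ℝ) (A : Ω → Prop) : ℝ :=
  (∑ ω, if A ω then p ω * f ω else 0) / Pr p A

noncomputable def Ex {Ω : Type*} [Fintype Ω] (p : Ω → ℝ) (f : Ω → ℝ) : ℝ :=
  ∑ ω, p ω * f ω

theorem Ex_eq_Pr_mul_CE_of_eq_zero {Ω : Type*} [Fintype Ω] (p f : Ω → ℝ) (A : Ω → Prop)
    (hf : ∀ ω, ¬A ω → f ω = 0) (hA : Pr p A ≠ 0) :
    Ex p f = Pr p A * CE p f A := by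
  rw [CE, mul_div_cancel₀ _ hA, Ex]
  refine sum_congr rfl fun ω _ => ?_
  split_ifs with h
  · rfl
  · rw [hf ω h, mul_zero]

theorem eq_of_not_complier {D₀ D₁ : Bool} (hmono : D₀ = true → D₁ = true)
    (h : ¬(D₀ = false ∧ D₁ = true)) : D₀ = D₁ := by
  cases D₀ <;> cases D₁ <;> simp_all

theorem stmt2_general {Ω : Type*} [Fintype Ω] (p : Ω → ℝ)
    (D : Bool → Ω → Bool) (Y : Bool → Bool → Ω → ℝ)
    (hmono : ∀ ω, D false ω = true → D true ω = true)
    (hexcl : ∀ ω, D false ω = D true ω →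
      Y true (D true ω) ω = Y false (D false ω) ω)
    (hcomp : 0 < Pr p (fun ω => D false ω = false ∧ D true ω = true)) :
    Ex p (fun ω => Y true (D true ω) ω - Y false (D false ω) ω) =
      Pr p (fun ω => D false ω = false ∧ D true ω = true) *
        CE p (fun ω => Y true (D true ω) ω - Y false (D false ω) ω)
          (fun ω => D false ω = false ∧ D true ω = true) := by
  refine Ex_eq_Pr_mul_CE_of_eq_zero p _ _ (fun ω hω => ?_) hcomp.ne'
  rw [hexcl ω (eq_of_not_complier (hmono ω) hω), sub_self]

/-- under monotonicity (no defiers) and the exclusion restriction for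
never-takers and always-takers, the intent-to-treat effect equals the probability of
being a complier times the average causal effect among compliers (the CACE identity).
Here `D z ω` is treatment received under assignment `z`, and `Y z d ω` is the
potential outcome under assignment `z` and treatment `d`. -/
theorem stmt2 {Ω : Type*} [Fintype Ω] (p : Ω → ℝ)
    (hp : ∀ ω, 0 ≤ p ω) (hsum : ∑ ω, p ω = 1)
    (D : Bool → Ω → Bool) (Y : Bool → Bool → Ω → ℝ)
    (hmono : ∀ ω, D false ω = true → D true ω = true)
    (hexcl : ∀ ω, D false ω = D true ω →
      Y true (D true ω) ω = Y false (D false ω) ω)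
    (hcomp : 0 < Pr p (fun ω => D false ω = false ∧ D true ω = true)) :
    Ex p (fun ω => Y true (D true ω) ω - Y false (D false ω) ω) =
      Pr p (fun ω => D false ω = false ∧ D true ω = true) *
        CE p (fun ω => Y true (D true ω) ω - Y false (D false ω) ω)
          (fun ω => D false ω = false ∧ D true ω = true) :=
  stmt2_general p D Y hmono hexcl hcomp
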